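/- Every diamond-free graph with at least one edge has an effective competition cover. -/

import Mathlib

/-- A digraph (given by its arc relation) is acyclic if it has no directed cycle. -/
def Digraph.Acyclic {W : Type*} (A : W → W → Prop) : Prop :=
  ∀ v, ¬ Relation.TransGen A v v

/-- The competition graph of a digraph: distinct `x`, `y` are adjacent iff
they have a common out-neighbor. -/
def competitionGraph {W : Type*} (A : W → W → Prop) : SimpleGraph W where
  Adj x y := x ≠ y ∧ ∃ z, A x z ∧ A y z
  symm := by
    constructor
    rintro x y ⟨h, z, hx, hy⟩
    exact ⟨h.symm, z, hy, hx⟩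
  loopless := by
    constructor
    rintro x ⟨h, -⟩
    exact h rfl

/-- `G` together with `k` additional isolated vertices. -/
def addIsolated {V : Type*} (G : SimpleGraph V) (k : ℕ) : SimpleGraph (V ⊕ Fin k) where
  Adj x y := ∃ u v, G.Adj u v ∧ x = Sum.inl u ∧ y = Sum.inl v
  symm := by
    constructor
    rintro x y ⟨u, v, h, rfl, rfl⟩
    exact ⟨v, u, h.symm, rfl, rfl⟩
  loopless := by
    constructor
    rintro x ⟨u, v, h, rfl, hy⟩
    exact G.loopless.irrefl u (Sum.inl.inj hy ▸ h)

/-- `F` is an edge clique cover of `G`. -/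
def IsEdgeCliqueCover {V : Type*} (G : SimpleGraph V) (F : Finset (Set V)) : Prop :=
  (∀ C ∈ F, G.IsClique C) ∧ ∀ u v, G.Adj u v → ∃ C ∈ F, u ∈ C ∧ v ∈ C

/-- The edge clique cover number `θ_e(G)`. -/
noncomputable def eccNumber {V : Type*} (G : SimpleGraph V) : ℕ :=
  sInf {n | ∃ F : Finset (Set V), IsEdgeCliqueCover G F ∧ F.card = n}

/-- An acyclic digraph `A` on `V ⊕ Fin k` realizes `G` with `k` added isolated vertices
if its competition graph is `G` together with `k` isolated vertices. -/
def Realizes {V : Type*} (G : SimpleGraph V) (k : ℕ)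
    (A : (V ⊕ Fin k) → (V ⊕ Fin k) → Prop) : Prop :=
  Digraph.Acyclic A ∧ competitionGraph A = addIsolated G k

/-- The competition number `k(G)`. -/
noncomputable def compNumber {V : Type*} (G : SimpleGraph V) : ℕ :=
  sInf {k | ∃ A : (V ⊕ Fin k) → (V ⊕ Fin k) → Prop, Realizes G k A}

/-- The primary predator index `p(G)`: the maximum number of in-degree-0 vertices over
all acyclic digraphs whose competition graph is `G` plus `k(G)` isolated vertices. -/
noncomputable def predatorIndex {V : Type*} (G : SimpleGraph V) : ℕ :=
  sSup {n | ∃ A : (V ⊕ Fin (compNumber G)) → (V ⊕ Fin (compNumber G)) → Prop,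
    Realizes G (compNumber G) A ∧ {v | ∀ u, ¬ A u v}.ncard = n}

/-- `C` is a maximal clique of `G`. -/
def IsMaximalClique {V : Type*} (G : SimpleGraph V) (C : Set V) : Prop :=
  G.IsClique C ∧ ∀ D : Set V, G.IsClique D → C ⊆ D → C = D

/-- The acyclic digraph `A` accompanies the minimum edge clique cover `𝒞`. -/
def Accompanies {V : Type*} (G : SimpleGraph V) (𝒞 : Finset (Set V))
    (A : (V ⊕ Fin (compNumber G)) → (V ⊕ Fin (compNumber G)) → Prop) : Prop :=
  Realizes G (compNumber G) A ∧
  ∃ w : 𝒞 → (V ⊕ Fin (compNumber G)), Function.Injective w ∧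
    (∀ C : 𝒞, ∀ v ∈ (C : Set V), A (Sum.inl v) (w C)) ∧
    {x | ∃ u, A u x} = Set.range w

/-- `𝒞` is an effective competition cover of `G`. -/
def IsEffectiveCompetitionCover {V : Type*} (G : SimpleGraph V) (𝒞 : Finset (Set V)) : Prop :=
  IsEdgeCliqueCover G 𝒞 ∧ 𝒞.card = eccNumber G ∧
  (∀ C ∈ 𝒞, IsMaximalClique G C) ∧
  ∃ A : (V ⊕ Fin (compNumber G)) → (V ⊕ Fin (compNumber G)) → Prop, Accompanies G 𝒞 A

/-- The diamond graph: `K₄` minus the edge between vertices `2` and `3`. -/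
def diamondGraph : SimpleGraph (Fin 4) where
  Adj i j := i ≠ j ∧ ¬(i = 2 ∧ j = 3) ∧ ¬(i = 3 ∧ j = 2)
  symm := by
    constructor
    rintro i j ⟨h, h1, h2⟩
    exact ⟨h.symm, fun ⟨a, b⟩ => h2 ⟨b, a⟩, fun ⟨a, b⟩ => h1 ⟨b, a⟩⟩
  loopless := by
    constructor
    rintro i ⟨h, -⟩
    exact h rfl

/-- `G` contains `H` as an induced subgraph. -/
def ContainsInduced {V W : Type*} (G : SimpleGraph V) (H : SimpleGraph W) : Prop :=
  ∃ f : W ↪ V, ∀ a b, G.Adj (f a) (f b) ↔ H.Adj a b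

/-- `G` is diamond-free: it has no induced diamond. -/
def DiamondFree {V : Type*} (G : SimpleGraph V) : Prop :=
  ¬ ContainsInduced G diamondGraph

/-- `G` is chordal: it has no induced cycle of length at least `4`. -/
def Chordal {V : Type*} (G : SimpleGraph V) : Prop :=
  ∀ n, 4 ≤ n → ¬ ContainsInduced G (SimpleGraph.cycleGraph n)

/-- The edge `uv` is occupied by `C`: `C` is the unique maximal clique covering `uv`. -/
def Occupies {V : Type*} (G : SimpleGraph V) (C : Set V) (u v : V) : Prop :=
  G.Adj u v ∧ IsMaximalClique G C ∧ u ∈ C ∧ v ∈ C ∧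
    ∀ C' : Set V, IsMaximalClique G C' → u ∈ C' → v ∈ C' → C' = C

/-! In a diamond-free graph every edge lies in exactly one maximal clique, so the maximal cliques
containing an edge form a minimum edge clique cover `𝒞`. Fix an acyclic digraph
realizing `G` with `k(G)` isolated vertices and a rank `r` strictly increasing along its arcs.
For `C ∈ 𝒞` let `w C` be an `r`-maximal common prey of an edge of `C`; different cliques get
different prey, since the in-neighbourhood of a prey is a clique. Making `w C` the common prey
of all of `C` and nothing else gives a digraph realizing `G` with the same isolated vertices,
and it is acyclic because each of its arcs `v → w C` increases `r`. -/

open Function Relation Sum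

section

variable {V : Type*} {G : SimpleGraph V}

lemma Digraph.acyclic_of_rank {W : Type*} {A : W → W → Prop} (r : W → ℕ)
    (hr : ∀ x y, A x y → r x < r y) : Digraph.Acyclic A := by
  intro v hv
  have hlt := hv.lift r hr
  rw [transGen_eq_self] at hlt
  exact lt_irrefl (r v) hlt

lemma Digraph.Acyclic.exists_rank {W : Type*} [Finite W] {A : W → W → Prop}
    (hA : Digraph.Acyclic A) : ∃ r : W → ℕ, ∀ x y, A x y → r x < r y := by
  classical
  have := Fintype.ofFinite W
  refine ⟨fun x => (Finset.univ.filter (TransGen A · x)).card, fun x y hxy =>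
    Finset.card_lt_card ((Finset.ssubset_iff_of_subset fun z hz => ?_).2 ⟨x, ?_, ?_⟩)⟩
  · simp only [Finset.mem_filter, Finset.mem_univ, true_and] at hz ⊢
    exact hz.tail hxy
  · simpa using TransGen.single hxy
  · simpa using hA x

lemma exists_isMaximalClique_superset {K : Set V} (hK : G.IsClique K) :
    ∃ M, IsMaximalClique G M ∧ K ⊆ M := by
  obtain ⟨M, hKM, hM⟩ := zorn_subset_nonempty {D | G.IsClique D}
    (fun c hc hchain _ => ⟨⋃₀ c, (SimpleGraph.isClique_sUnion hchain.directedOn).2 hc,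
      fun _ => Set.subset_sUnion_of_mem⟩) K hK
  exact ⟨M, ⟨hM.prop, fun D hD hMD => hM.eq_of_subset hD hMD⟩, hKM⟩

lemma exists_adj_of_mem_isClique {C : Set V} (hC : G.IsClique C) {u v x : V} (huv : G.Adj u v)
    (hu : u ∈ C) (hv : v ∈ C) (hx : x ∈ C) : ∃ y ∈ C, G.Adj x y := by
  by_cases hxu : x = u
  · exact ⟨v, hv, hxu ▸ huv⟩
  · exact ⟨u, hu, hC hx hu hxu⟩

lemma containsInduced_diamond {u v x y : V} (huv : G.Adj u v) (hxu : G.Adj x u)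
    (hxv : G.Adj x v) (hyu : G.Adj y u) (hyv : G.Adj y v) (hxy : x ≠ y) (hnxy : ¬ G.Adj x y) :
    ContainsInduced G diamondGraph := by
  refine ⟨⟨![u, v, x, y], fun a b hab => ?_⟩, fun a b => ?_⟩
  · fin_cases a <;> fin_cases b <;>
      simp_all [huv.ne, huv.ne.symm, hxu.ne, hxu.ne.symm, hxv.ne, hxv.ne.symm, hyu.ne,
        hyu.ne.symm, hyv.ne, hyv.ne.symm]
  · change G.Adj (![u, v, x, y] a) (![u, v, x, y] b) ↔ diamondGraph.Adj a b
    fin_cases a <;> fin_cases b <;>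
      simp [diamondGraph, huv, huv.symm, hxu, hxu.symm, hxv, hxv.symm, hyu, hyu.symm, hyv,
        hyv.symm, hnxy, mt G.adj_symm hnxy]

lemma DiamondFree.subset_of_isClique (hdf : DiamondFree G) {u v : V} (huv : G.Adj u v)
    {C K : Set V} (hC : IsMaximalClique G C) (hu : u ∈ C) (hv : v ∈ C) (hK : G.IsClique K)
    (hu' : u ∈ K) (hv' : v ∈ K) : K ⊆ C := by
  intro x hxK
  by_contra hxC
  obtain ⟨y, hyC, hxy, hnxy⟩ : ∃ y ∈ C, x ≠ y ∧ ¬ G.Adj x y := by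
    by_contra! h
    exact hxC ((hC.2 _ (hC.1.insert h) (Set.subset_insert x C)) ▸ Set.mem_insert x C)
  have hxu : G.Adj x u := hK hxK hu' (by rintro rfl; exact hxC hu)
  have hxv : G.Adj x v := hK hxK hv' (by rintro rfl; exact hxC hv)
  have hyu : G.Adj y u := hC.1 hyC hu (by rintro rfl; exact hnxy hxu)
  have hyv : G.Adj y v := hC.1 hyC hv (by rintro rfl; exact hnxy hxv)
  exact hdf (containsInduced_diamond huv hxu hxv hyu hyv hxy hnxy)

lemma DiamondFree.eq_of_isMaximalClique (hdf : DiamondFree G) {u v : V} (huv : G.Adj u v)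
    {C C' : Set V} (hC : IsMaximalClique G C) (hC' : IsMaximalClique G C')
    (hu : u ∈ C) (hv : v ∈ C) (hu' : u ∈ C') (hv' : v ∈ C') : C = C' :=
  hC.2 C' hC'.1 (hdf.subset_of_isClique huv hC' hu' hv' hC.1 hu hv)

variable (G) in
noncomputable def maximalEdgeCliques [Finite V] : Finset (Set V) :=
  (Set.toFinite {C | IsMaximalClique G C ∧ ∃ u v, G.Adj u v ∧ u ∈ C ∧ v ∈ C}).toFinset

lemma mem_maximalEdgeCliques [Finite V] {C : Set V} :
    C ∈ maximalEdgeCliques G ↔ IsMaximalClique G C ∧ ∃ u v, G.Adj u v ∧ u ∈ C ∧ v ∈ C :=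
  Set.Finite.mem_toFinset _

lemma isMaximalClique_of_mem_maximalEdgeCliques [Finite V] {C : Set V}
    (hC : C ∈ maximalEdgeCliques G) : IsMaximalClique G C :=
  (mem_maximalEdgeCliques.1 hC).1

variable (G) in
lemma isEdgeCliqueCover_maximalEdgeCliques [Finite V] :
    IsEdgeCliqueCover G (maximalEdgeCliques G) := by
  refine ⟨fun C hC => (isMaximalClique_of_mem_maximalEdgeCliques hC).1, fun u v huv => ?_⟩
  obtain ⟨M, hM, huvM⟩ :=
    exists_isMaximalClique_superset (SimpleGraph.isClique_pair.2 fun _ => huv)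
  have hu : u ∈ M := huvM (Set.mem_insert u {v})
  have hv : v ∈ M := huvM (Set.mem_insert_of_mem u rfl)
  exact ⟨M, mem_maximalEdgeCliques.2 ⟨hM, u, v, huv, hu, hv⟩, hu, hv⟩

lemma DiamondFree.card_maximalEdgeCliques_le [Finite V] (hdf : DiamondFree G)
    {F : Finset (Set V)} (hF : IsEdgeCliqueCover G F) :
    (maximalEdgeCliques G).card ≤ F.card := by
  have hD : ∀ C ∈ maximalEdgeCliques G,
      ∃ D ∈ F, ∃ u v, G.Adj u v ∧ u ∈ C ∧ v ∈ C ∧ u ∈ D ∧ v ∈ D := by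
    intro C hC
    obtain ⟨-, u, v, huv, hu, hv⟩ := mem_maximalEdgeCliques.1 hC
    obtain ⟨D, hD, hu', hv'⟩ := hF.2 u v huv
    exact ⟨D, hD, u, v, huv, hu, hv, hu', hv'⟩
  choose! D hDF hDedge using hD
  refine Finset.card_le_card_of_injOn D hDF fun C₁ hC₁ C₂ hC₂ hD₁₂ => ?_
  have hmax₁ := isMaximalClique_of_mem_maximalEdgeCliques hC₁
  have hmax₂ := isMaximalClique_of_mem_maximalEdgeCliques hC₂
  obtain ⟨u, v, huv, hu, hv, huD, hvD⟩ := hDedge C₁ hC₁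
  obtain ⟨u₂, v₂, huv₂, hu₂, hv₂, hu₂D, hv₂D⟩ := hDedge C₂ hC₂
  have hDC₂ : D C₁ ⊆ C₂ := hD₁₂ ▸ hdf.subset_of_isClique huv₂ hmax₂ hu₂ hv₂
    (hF.1 _ (hDF C₂ hC₂)) hu₂D hv₂D
  exact hdf.eq_of_isMaximalClique huv hmax₁ hmax₂ hu hv (hDC₂ huD) (hDC₂ hvD)

lemma DiamondFree.card_maximalEdgeCliques [Finite V] (hdf : DiamondFree G) :
    (maximalEdgeCliques G).card = eccNumber G :=
  le_antisymm
    (le_csInf ⟨_, _, isEdgeCliqueCover_maximalEdgeCliques G, rfl⟩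
      fun _ ⟨_, hF, hn⟩ => hn ▸ hdf.card_maximalEdgeCliques_le hF)
    (Nat.sInf_le ⟨_, isEdgeCliqueCover_maximalEdgeCliques G, rfl⟩)

variable {k : ℕ}

lemma Realizes.adj_iff {A : V ⊕ Fin k → V ⊕ Fin k → Prop} (hA : Realizes G k A) {u v : V} :
    G.Adj u v ↔ u ≠ v ∧ ∃ z, A (inl u) z ∧ A (inl v) z := by
  have := congrArg (fun H : SimpleGraph (V ⊕ Fin k) => H.Adj (inl u) (inl v)) hA.2
  simp only [competitionGraph, addIsolated, ne_eq, inl.injEq] at this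
  rw [ne_eq, this]
  exact ⟨fun h => ⟨u, v, h, rfl, rfl⟩, by rintro ⟨_, _, h, rfl, rfl⟩; exact h⟩

lemma Realizes.isClique_setOf_arc {A : V ⊕ Fin k → V ⊕ Fin k → Prop} (hA : Realizes G k A)
    (z : V ⊕ Fin k) : G.IsClique {c | A (inl c) z} :=
  fun _ ha _ hb hab => hA.adj_iff.2 ⟨hab, z, ha, hb⟩

def cliquePreyDigraph (𝒞 : Finset (Set V)) (w : 𝒞 → V ⊕ Fin k) (x y : V ⊕ Fin k) : Prop :=
  ∃ C : 𝒞, ∃ v ∈ (C : Set V), x = inl v ∧ y = w C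

variable {𝒞 : Finset (Set V)} {w : 𝒞 → V ⊕ Fin k}

lemma competitionGraph_cliquePreyDigraph (h𝒞 : IsEdgeCliqueCover G 𝒞) (hw : Injective w) :
    competitionGraph (cliquePreyDigraph 𝒞 w) = addIsolated G k := by
  ext x y
  constructor
  · rintro ⟨hne, z, ⟨C, u, hu, rfl, rfl⟩, ⟨C', v, hv, rfl, hCC'⟩⟩
    obtain rfl := hw hCC'
    exact ⟨u, v, h𝒞.1 C C.2 hu hv fun h => hne (h ▸ rfl), rfl, rfl⟩
  · rintro ⟨u, v, huv, rfl, rfl⟩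
    obtain ⟨C, hC, hu, hv⟩ := h𝒞.2 u v huv
    exact ⟨by simpa using huv.ne, w ⟨C, hC⟩, ⟨⟨C, hC⟩, u, hu, rfl, rfl⟩,
      ⟨⟨C, hC⟩, v, hv, rfl, rfl⟩⟩

lemma realizes_cliquePreyDigraph (h𝒞 : IsEdgeCliqueCover G 𝒞) (hw : Injective w)
    (r : V ⊕ Fin k → ℕ) (hr : ∀ C : 𝒞, ∀ v ∈ (C : Set V), r (inl v) < r (w C)) :
    Realizes G k (cliquePreyDigraph 𝒞 w) :=
  ⟨Digraph.acyclic_of_rank r (by rintro _ _ ⟨C, v, hv, rfl, rfl⟩; exact hr C v hv),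
    competitionGraph_cliquePreyDigraph h𝒞 hw⟩

lemma setOf_exists_cliquePreyDigraph (hne : ∀ C : 𝒞, (C : Set V).Nonempty) :
    {y | ∃ x, cliquePreyDigraph 𝒞 w x y} = Set.range w := by
  ext y
  constructor
  · rintro ⟨_, C, _, _, -, rfl⟩
    exact ⟨C, rfl⟩
  · rintro ⟨C, rfl⟩
    obtain ⟨v, hv⟩ := hne C
    exact ⟨inl v, C, v, hv, rfl, rfl⟩

variable (G) in
lemma exists_realizes_compNumber [Finite V] : ∃ A, Realizes G (compNumber G) A :=
  Nat.sInf_mem (s := {k | ∃ A, Realizes G k A}) ⟨_, _,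
    realizes_cliquePreyDigraph (isEdgeCliqueCover_maximalEdgeCliques G)
      (inr_injective.comp (maximalEdgeCliques G).equivFin.injective) (Sum.elim 0 1)
      fun _ _ _ => Nat.zero_lt_one⟩

variable (G) in
def edgePrey (A : V ⊕ Fin k → V ⊕ Fin k → Prop) (C : Set V) : Set (V ⊕ Fin k) :=
  {z | ∃ u ∈ C, ∃ v ∈ C, G.Adj u v ∧ A (inl u) z ∧ A (inl v) z}

lemma DiamondFree.eq_of_mem_edgePrey (hdf : DiamondFree G)
    {A : V ⊕ Fin k → V ⊕ Fin k → Prop} (hA : Realizes G k A) {C C' : Set V}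
    (hC : IsMaximalClique G C) (hC' : IsMaximalClique G C') {z : V ⊕ Fin k}
    (hz : z ∈ edgePrey G A C) (hz' : z ∈ edgePrey G A C') : C = C' := by
  obtain ⟨u, hu, v, hv, huv, huz, hvz⟩ := hz
  obtain ⟨u', hu', v', hv', hu'v', hu'z, hv'z⟩ := hz'
  have hK : {c | A (inl c) z} ⊆ C :=
    hdf.subset_of_isClique huv hC hu hv (hA.isClique_setOf_arc z) huz hvz
  exact hdf.eq_of_isMaximalClique hu'v' hC hC' (hK hu'z) (hK hv'z) hu' hv'

lemma DiamondFree.exists_injective_prey [Finite V] (hdf : DiamondFree G)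
    {A : V ⊕ Fin k → V ⊕ Fin k → Prop} (hA : Realizes G k A) (r : V ⊕ Fin k → ℕ)
    (hr : ∀ x y, A x y → r x < r y) :
    ∃ w : maximalEdgeCliques G → V ⊕ Fin k, Injective w ∧
      ∀ C : maximalEdgeCliques G, ∀ v ∈ (C : Set V), r (inl v) < r (w C) := by
  have hne : ∀ C : maximalEdgeCliques G, (edgePrey G A C).Nonempty := by
    intro C
    obtain ⟨-, u, v, huv, hu, hv⟩ := mem_maximalEdgeCliques.1 C.2
    obtain ⟨z, huz, hvz⟩ := (hA.adj_iff.1 huv).2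
    exact ⟨z, u, hu, v, hv, huv, huz, hvz⟩
  choose w hwZ hwmax using fun C => Set.exists_max_image _ r (Set.toFinite _) (hne C)
  have hmax := fun C : maximalEdgeCliques G => isMaximalClique_of_mem_maximalEdgeCliques C.2
  refine ⟨w, fun C C' h => Subtype.ext (hdf.eq_of_mem_edgePrey hA (hmax C) (hmax C') (hwZ C)
    (h ▸ hwZ C')), fun C v hv => ?_⟩
  obtain ⟨-, a, b, hab, ha, hb⟩ := mem_maximalEdgeCliques.1 C.2
  obtain ⟨u, hu, hvu⟩ := exists_adj_of_mem_isClique (hmax C).1 hab ha hb hv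
  obtain ⟨z, hvz, huz⟩ := (hA.adj_iff.1 hvu).2
  exact (hr _ _ hvz).trans_le (hwmax C z ⟨v, hv, u, hu, hvu, hvz, huz⟩)

end

theorem stmt11_general {V : Type*} [Fintype V] (G : SimpleGraph V) (hdf : DiamondFree G) :
    ∃ 𝒞 : Finset (Set V), IsEffectiveCompetitionCover G 𝒞 := by
  obtain ⟨A, hA⟩ := exists_realizes_compNumber G
  obtain ⟨r, hr⟩ := hA.1.exists_rank
  obtain ⟨w, hw, hrw⟩ := hdf.exists_injective_prey hA r hr
  have hcover := isEdgeCliqueCover_maximalEdgeCliques G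
  refine ⟨maximalEdgeCliques G, hcover, hdf.card_maximalEdgeCliques,
    fun _ => isMaximalClique_of_mem_maximalEdgeCliques, cliquePreyDigraph _ w,
    realizes_cliquePreyDigraph hcover hw r hrw, w, hw, fun C v hv => ⟨C, v, hv, rfl, rfl⟩,
    setOf_exists_cliquePreyDigraph fun C => ?_⟩
  obtain ⟨-, u, -, -, hu, -⟩ := mem_maximalEdgeCliques.1 C.2
  exact ⟨u, hu⟩

/-- every diamond-free graph with at least one edge has an effective
competition cover. -/
theorem stmt11 {V : Type*} [Fintype V] (G : SimpleGraph V) (hdf : DiamondFree G)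
    (hedge : ∃ u v : V, G.Adj u v) :
    ∃ 𝒞 : Finset (Set V), IsEffectiveCompetitionCover G 𝒞 :=
  stmt11_general G hdf
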